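/- arXiv:1101.2949 — 2 statements merged into one kernel-verified Lean document; each statement's English description precedes it below -/
import Mathlib

section
/- Let (B_m) be an elliptic divisibility sequence coming from a Weierstrass equation with a_1 even, p a prime, and suppose p is the smallest positive index m_0 with p | B_{m_0}. Write m = p^e · m' with p not dividing m'. If B_m is a perfect l-th power, then B_{m'} is also a perfect l-th power, and p does not divide B_{m'}. -/
open WeierstrassCurve

/-
Proof idea: for a prime `q ∣ B m'` we have `q ≠ p`, since `p ∤ m'`, so the valuation formula gives
`v_q(B m) = v_q(B m') + v_q(p ^ e) = v_q(B m')`. Hence every exponent in the factorisation of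
the positive integer `B m'` equals one of `B m = z ^ l`, and is therefore divisible by `l`.
-/

theorem Nat.exists_eq_pow_of_forall_dvd_factorization {n l : ℕ} (hn : n ≠ 0)
    (h : ∀ q, l ∣ n.factorization q) : ∃ w, n = w ^ l := by
  refine ⟨n.factorization.prod fun q k => q ^ (k / l), ?_⟩
  conv_lhs => rw [← Nat.prod_factorization_pow_eq_self hn]
  rw [Finsupp.prod, Finsupp.prod, ← Finset.prod_pow]
  refine Finset.prod_congr rfl fun q _ => ?_
  rw [← pow_mul, Nat.div_mul_cancel (h q)]

theorem Int.exists_eq_pow_of_forall_dvd_padicValInt {b : ℤ} (hb : 0 < b) {l : ℕ}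
    (h : ∀ q : ℕ, q.Prime → (q : ℤ) ∣ b → l ∣ padicValInt q b) : ∃ w : ℤ, b = w ^ l := by
  have hfact : ∀ q, l ∣ b.natAbs.factorization q := by
    intro q
    by_cases hq : q.Prime
    · by_cases hqb : (q : ℤ) ∣ b
      · simpa [Nat.factorization_def _ hq, padicValInt] using h q hq hqb
      · rw [Nat.factorization_eq_zero_of_not_dvd (Int.ofNat_dvd_left.not.mp hqb)]
        exact dvd_zero l
    · rw [Nat.factorization_eq_zero_of_not_prime _ hq]
      exact dvd_zero l
  obtain ⟨w, hw⟩ := Nat.exists_eq_pow_of_forall_dvd_factorization (Int.natAbs_ne_zero.mpr hb.ne') hfact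
  exact ⟨w, by rw [← Int.natAbs_of_nonneg hb.le, hw]; push_cast; rfl⟩

theorem dvd_padicValInt_pow {q : ℕ} (hq : q.Prime) (z : ℤ) (l : ℕ) :
    l ∣ padicValInt q (z ^ l) := by
  have := Fact.mk hq
  rw [padicValInt, Int.natAbs_pow, padicValNat.pow]
  exact dvd_mul_right l _

theorem stmt_4_general (W : Affine ℚ)
    (P : W.Point)
    (A B : ℕ → ℤ) (y : ℕ → ℚ)
    (hAB : ∀ m : ℕ, 0 < m → 0 < B m ∧ Int.gcd (A m) (B m) = 1 ∧
      ∃ h : W.Nonsingular ((A m : ℚ) / (B m : ℚ) ^ 2) (y m), (m • P : W.Point) = .some _ _ h)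
    (p : ℕ) (hp : p.Prime)
    (hdiv : ∀ m : ℕ, 0 < m → ((p : ℤ) ∣ B m ↔ p ∣ m))
    (hval : ∀ q : ℕ, q.Prime → ∀ m n : ℕ, 0 < m → 0 < n → (q : ℤ) ∣ B n →
      padicValInt q (B (m * n)) = padicValInt q (B n) + padicValNat q m)
    (e : ℕ) (m m' : ℕ) (hm' : 0 < m') (hpm' : ¬ p ∣ m') (hm : m = p ^ e * m')
    (l : ℕ) (z : ℤ) (hpow : B m = z ^ l) :
    (∃ w : ℤ, B m' = w ^ l) ∧ ¬ (p : ℤ) ∣ B m' := by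
  have hpB : ¬ (p : ℤ) ∣ B m' := fun h => hpm' ((hdiv m' hm').mp h)
  refine ⟨Int.exists_eq_pow_of_forall_dvd_padicValInt (hAB m' hm').1 fun q hq hqB => ?_, hpB⟩
  have hq_ndvd : ¬ q ∣ p ^ e := fun h => by
    rw [(Nat.prime_dvd_prime_iff_eq hq hp).mp (hq.dvd_of_dvd_pow h)] at hqB
    exact hpB hqB
  have hvq := hval q hq (p ^ e) m' (pow_pos hp.pos e) hm' hqB
  rw [← hm, padicValNat.eq_zero_of_not_dvd hq_ndvd, add_zero, hpow] at hvq
  exact hvq ▸ dvd_padicValInt_pow hq z l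

/-- Let `(B m)` be an elliptic divisibility sequence coming from an integral Weierstrass
equation with `a₁` even, and `p` a prime which is the smallest positive index `m₀ = p` with
`p ∣ B m₀`.  Write `m = p ^ e * m'` with `p ∤ m'`.  If `B m` is a perfect `l`-th power then so
is `B m'`, and moreover `p ∤ B m'`.  (The divisibility and valuation properties of elliptic
divisibility sequences from Lemma 2.1 of the paper are included as hypotheses.) -/
theorem stmt_4 (W : Affine ℚ)
    (a₁ a₂ a₃ a₄ a₆ : ℤ) (ha₁ : Even a₁)
    (hint : W.a₁ = a₁ ∧ W.a₂ = a₂ ∧ W.a₃ = a₃ ∧ W.a₄ = a₄ ∧ W.a₆ = a₆)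
    (P : W.Point) (hPtor : ∀ n : ℕ, 0 < n → n • P ≠ 0)
    (A B : ℕ → ℤ) (y : ℕ → ℚ)
    (hAB : ∀ m : ℕ, 0 < m → 0 < B m ∧ Int.gcd (A m) (B m) = 1 ∧
      ∃ h : W.Nonsingular ((A m : ℚ) / (B m : ℚ) ^ 2) (y m), (m • P : W.Point) = .some _ _ h)
    (p : ℕ) (hp : p.Prime)
    (hdvd : (p : ℤ) ∣ B p) (hmin : ∀ k : ℕ, 0 < k → k < p → ¬ (p : ℤ) ∣ B k)
    (hdiv : ∀ m : ℕ, 0 < m → ((p : ℤ) ∣ B m ↔ p ∣ m))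
    (hval : ∀ q : ℕ, q.Prime → ∀ m n : ℕ, 0 < m → 0 < n → (q : ℤ) ∣ B n →
      padicValInt q (B (m * n)) = padicValInt q (B n) + padicValNat q m)
    (e : ℕ) (m m' : ℕ) (hm' : 0 < m') (hpm' : ¬ p ∣ m') (hm : m = p ^ e * m')
    (l : ℕ) (z : ℤ) (hpow : B m = z ^ l) :
    (∃ w : ℤ, B m' = w ^ l) ∧ ¬ (p : ℤ) ∣ B m' :=
  stmt_4_general W P A B y hAB p hp hdiv hval e m m' hm' hpm' hm l z hpow
end

section
/- If r is a non-negative integer and U, V, W are non-zero pairwise coprime integers with U^4 - 2^r V^4 + W^4 = 0, then r = 1 and |U| = |V| = |W| = 1. Moreover, there are no non-zero pairwise coprime integers U, V, W with 2^r U^4 - V^4 + W^4 = 0. -/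
/-!
Fermat's descent shows that `x⁴ - y⁴ = z²` has no solution with `y z ≠ 0`: parametrising the
Pythagorean triple `(y², z, x²)` or `(z, y², x²)` of a primitive solution produces one with
smaller `|x|`. Its companion `x⁴ + y⁴ ≠ z²` (`not_fermat_42`) shows that `p q (p² + q²)` is
never a nonzero square: for coprime `p, q` both `p q` and `p² + q²` would be squares, so
`p = ±c²`, `q = ±e²` and `c⁴ + e⁴` is a square.

If `U⁴ + W⁴ = 2^r V⁴`, then `r = 0` contradicts `not_fermat_42`; coprimality makes `U, W`
odd, so `U⁴ + W⁴ ≡ 2 (mod 4)` and `r = 1`; then `(V²)⁴ - (U W)⁴ = (V⁴ - W⁴)²` forces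
`U⁴ = V⁴ = W⁴`. If `2^r U⁴ + W⁴ = V⁴`, then for even `r` the difference `V⁴ - W⁴` is a square,
and for odd `r` the numbers `p = V + W`, `q = V - W` make `p q (p² + q²) = 2 (V⁴ - W⁴)` a
nonzero square.
-/

theorem abs_eq_abs_of_pow_eq_pow {R : Type*} [Ring R] [LinearOrder R] [IsStrictOrderedRing R]
    {a b : R} {n : ℕ} (hn : n ≠ 0) (h : a ^ n = b ^ n) : |a| = |b| := by
  obtain rfl | ⟨rfl, -⟩ := (pow_eq_pow_iff_of_ne_zero hn).mp h
  · rfl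
  · exact abs_neg b

namespace Int

theorem eq_pow_of_mul_eq_pow_of_pos_left {a b c : ℤ} (hab : IsCoprime a b) {k : ℕ} (ha : 0 < a)
    (h : a * b = c ^ k) : ∃ d, a = d ^ k := by
  obtain ⟨d, hd⟩ := exists_associated_pow_of_mul_eq_pow' hab h
  refine ⟨|d|, ?_⟩
  rw [← abs_of_pos ha, ← abs_pow, ← natCast_natAbs, ← natCast_natAbs,
    associated_iff_natAbs.mp hd]

theorem exists_sq_of_pow_four_mul_eq_sq {g x s : ℤ} (hg : g ≠ 0) (h : g ^ 4 * x = s ^ 2) :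
    ∃ y, x = y ^ 2 := by
  obtain ⟨y, rfl⟩ : g ^ 2 ∣ s := (pow_dvd_pow_iff two_ne_zero).mp ⟨x, by rw [← h]; ring⟩
  exact ⟨y, mul_left_cancel₀ (pow_ne_zero 4 hg) (by rw [h]; ring)⟩

theorem odd_and_odd_of_isCoprime {x y : ℤ} (h : IsCoprime x y) (hxy : Even x ↔ Even y) :
    Odd x ∧ Odd y := by
  by_cases hx : Even x
  · exact absurd (h.isUnit_of_dvd' hx.two_dvd (hxy.mp hx).two_dvd) prime_two.not_isUnit
  · exact ⟨not_even_iff_odd.mp hx, not_even_iff_odd.mp (hxy.not.mp hx)⟩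

theorem exists_pow_four_sub_pow_four_eq_sq_of_sq_add_sq_eq_sq {a b m n : ℤ} (hm : 0 < m)
    (hn : 0 < n) (hmn : IsCoprime m n) (hm2 : Even m) (hsum : m ^ 2 + n ^ 2 = a ^ 2)
    (hprod : 2 * m * n = b ^ 2) :
    ∃ e f r : ℤ, e.natAbs < a.natAbs ∧ f ≠ 0 ∧ r ≠ 0 ∧ e ^ 4 - f ^ 4 = r ^ 2 := by
  have hn2 : Odd n := isCoprime_two_right.mp (hmn.symm.of_isCoprime_of_dvd_right hm2.two_dvd)
  have hn2m : IsCoprime n (2 * m) := (isCoprime_two_right.mpr hn2).mul_right hmn.symm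
  obtain ⟨r, rfl⟩ := eq_pow_of_mul_eq_pow_of_pos_left (c := b) (k := 2) hn2m hn
    (by linear_combination hprod)
  obtain ⟨s, hs⟩ := eq_pow_of_mul_eq_pow_of_pos_left (c := b) (k := 2) hn2m.symm (by positivity)
    (by linear_combination hprod)
  obtain ⟨t, rfl⟩ : Even s := (even_pow.mp (hs ▸ even_two_mul m)).1
  have ha : 0 < |a| := by
    rw [abs_pos]
    rintro rfl
    nlinarith
  -- `(n, m, |a|)` is again a primitive triple; `m = 2 p q = 2 t²` makes `p, q` squares.
  have htriple : PythagoreanTriple (r ^ 2) m |a| := by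
    rw [PythagoreanTriple, abs_mul_abs_self]; linear_combination hsum
  obtain ⟨p, q, hr, hm', ha', hpq, -, hp⟩ := htriple.coprime_classification'
    (isCoprime_iff_gcd_eq_one.mp hmn.symm) (odd_iff.mp hn2) ha
  have hpq_eq : p * q = t ^ 2 := by linarith
  have hpq_pos : 0 < p * q := by nlinarith
  have hp : 0 < p := lt_of_le_of_ne hp (by rintro rfl; simp at hpq_pos)
  have hq : 0 < q := pos_of_mul_pos_right hpq_pos hp.le
  have hpq' := isCoprime_iff_gcd_eq_one.mpr hpq
  obtain ⟨e, rfl⟩ := eq_pow_of_mul_eq_pow_of_pos_left hpq' hp hpq_eq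
  obtain ⟨f, rfl⟩ := eq_pow_of_mul_eq_pow_of_pos_left (c := t) (k := 2) hpq'.symm hq
    (by linear_combination hpq_eq)
  refine ⟨e, f, r, ?_, by rintro rfl; simp at hq, by rintro rfl; simp at hn,
    by linear_combination hr.symm⟩
  rw [natAbs_lt_iff_sq_lt, ← sq_abs a, ha']
  nlinarith

theorem exists_smaller_pow_four_sub_pow_four_eq_sq {a b c : ℤ} (hab : IsCoprime a b) (hb : b ≠ 0)
    (hc : c ≠ 0) (h : a ^ 4 - b ^ 4 = c ^ 2) :
    ∃ a' b' c' : ℤ, a'.natAbs < a.natAbs ∧ b' ≠ 0 ∧ c' ≠ 0 ∧ a' ^ 4 - b' ^ 4 = c' ^ 2 := by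
  have hb2 : 0 < b ^ 2 := by positivity
  have ha0 : a ≠ 0 := by rintro rfl; nlinarith
  have ha : 0 < a ^ 2 := by positivity
  have hbc : IsCoprime (b ^ 2) c := by
    have := (hab.symm.pow (m := 4) (n := 4)).add_mul_left_right (-1)
    rw [show a ^ 4 + b ^ 4 * -1 = c ^ 2 by linear_combination h] at this
    exact ((IsCoprime.pow_iff four_pos two_pos).mp this).pow_left
  rcases even_or_odd b with hbe | hbo
  · have hc2 : Odd c := by
      have ha2 : Odd a := isCoprime_two_right.mp (hab.of_isCoprime_of_dvd_right hbe.two_dvd)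
      have : Odd (c ^ 2) := h ▸ (ha2.pow.sub_even (hbe.pow_of_ne_zero four_ne_zero))
      exact odd_pow.mp this |>.resolve_right two_ne_zero
    have htriple : PythagoreanTriple c (b ^ 2) (a ^ 2) := by
      rw [PythagoreanTriple]; linear_combination -h
    obtain ⟨m, n, -, hb', ha', hmn, hparity, hm⟩ := htriple.coprime_classification'
      (isCoprime_iff_gcd_eq_one.mp hbc.symm) (odd_iff.mp hc2) ha
    have hmn_pos : 0 < m * n := by nlinarith
    have hm : 0 < m := lt_of_le_of_ne hm (by rintro rfl; simp at hmn_pos)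
    have hn : 0 < n := pos_of_mul_pos_right hmn_pos hm.le
    have hmn := isCoprime_iff_gcd_eq_one.mpr hmn
    rcases hparity with ⟨hm2, -⟩ | ⟨-, hn2⟩
    · exact exists_pow_four_sub_pow_four_eq_sq_of_sq_add_sq_eq_sq hm hn hmn
        (even_iff.mpr hm2) ha'.symm hb'.symm
    · exact exists_pow_four_sub_pow_four_eq_sq_of_sq_add_sq_eq_sq (b := b) hn hm hmn.symm
        (even_iff.mpr hn2) (by linear_combination ha'.symm) (by linear_combination hb'.symm)
  · have htriple : PythagoreanTriple (b ^ 2) c (a ^ 2) := by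
      rw [PythagoreanTriple]; linear_combination -h
    obtain ⟨m, n, hb', hc', ha', -, -, -⟩ := htriple.coprime_classification'
      (isCoprime_iff_gcd_eq_one.mp hbc) (odd_iff.mp hbo.pow) ha
    have hn : n ≠ 0 := by rintro rfl; simp [hc] at hc'
    refine ⟨m, n, a * b, ?_, hn, by positivity, ?_⟩
    · have : 0 < n ^ 2 := by positivity
      rw [natAbs_lt_iff_sq_lt, ha']
      linarith
    · linear_combination (-(m ^ 2 + n ^ 2)) * hb' + (-(b ^ 2)) * ha'

theorem exists_isCoprime_pow_four_sub_pow_four_eq_sq {a b c : ℤ} (hb : b ≠ 0) (hc : c ≠ 0)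
    (h : a ^ 4 - b ^ 4 = c ^ 2) :
    ∃ a' b' c' : ℤ, a'.natAbs ≤ a.natAbs ∧ IsCoprime a' b' ∧ b' ≠ 0 ∧ c' ≠ 0 ∧
      a' ^ 4 - b' ^ 4 = c' ^ 2 := by
  obtain ⟨g, a', b', hg, hab, rfl, rfl⟩ := exists_gcd_one' (gcd_pos_of_ne_zero_right a hb)
  have hg' : (g : ℤ) ≠ 0 := by positivity
  obtain ⟨c', hc'⟩ := exists_sq_of_pow_four_mul_eq_sq hg' (s := c) (x := a' ^ 4 - b' ^ 4)
    (by linear_combination h)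
  refine ⟨a', b', c', ?_, isCoprime_iff_gcd_eq_one.mpr hab, left_ne_zero_of_mul hb, ?_, hc'⟩
  · rw [natAbs_mul]
    exact Nat.le_mul_of_pos_right _ hg
  · rintro rfl
    exact hc (pow_eq_zero_iff two_ne_zero |>.mp (by linear_combination -h + (g : ℤ) ^ 4 * hc'))

theorem pow_four_sub_pow_four_ne_sq {a b c : ℤ} (hb : b ≠ 0) (hc : c ≠ 0) :
    a ^ 4 - b ^ 4 ≠ c ^ 2 := by
  induction hn : a.natAbs using Nat.strong_induction_on generalizing a b c with
  | _ n ih =>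
  intro h
  obtain ⟨a₁, b₁, c₁, ha₁, hab₁, hb₁, hc₁, h₁⟩ :=
    exists_isCoprime_pow_four_sub_pow_four_eq_sq hb hc h
  obtain ⟨a₂, b₂, c₂, ha₂, hb₂, hc₂, h₂⟩ :=
    exists_smaller_pow_four_sub_pow_four_eq_sq hab₁ hb₁ hc₁ h₁
  exact ih _ (by omega) hb₂ hc₂ rfl h₂

theorem mul_mul_sq_add_sq_ne_sq_of_isCoprime {p q s : ℤ} (hpq : IsCoprime p q) (hp : p ≠ 0)
    (hq : q ≠ 0) : p * q * (p ^ 2 + q ^ 2) ≠ s ^ 2 := by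
  intro h
  have hsum : 0 < p ^ 2 + q ^ 2 := by positivity
  have hcop := isCoprime_of_sq_sum' hpq
  obtain ⟨a, ha⟩ := eq_pow_of_mul_eq_pow_of_pos_left (c := s) (k := 2) hcop hsum
    (by linear_combination h)
  have hprod : 0 < p * q := by
    refine lt_of_le_of_ne ?_ (mul_ne_zero hp hq).symm
    exact (mul_nonneg_iff_of_pos_right hsum).mp (h ▸ sq_nonneg s)
  obtain ⟨d, hd⟩ := eq_pow_of_mul_eq_pow_of_pos_left (c := s) (k := 2) hcop.symm hprod
    (by linear_combination h)
  obtain ⟨c, hc⟩ := sq_of_isCoprime hpq hd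
  obtain ⟨e, he⟩ := sq_of_isCoprime hpq.symm (c := d) (by linear_combination hd)
  apply not_fermat_42 (c := a) (a := c) (b := e)
  · rintro rfl
    rcases hc with rfl | rfl <;> simp at hp
  · rintro rfl
    rcases he with rfl | rfl <;> simp at hq
  · rw [← ha]
    rcases hc with rfl | rfl <;> rcases he with rfl | rfl <;> ring

theorem mul_mul_sq_add_sq_ne_sq {p q s : ℤ} (hp : p ≠ 0) (hq : q ≠ 0) :
    p * q * (p ^ 2 + q ^ 2) ≠ s ^ 2 := by
  obtain ⟨g, p', q', hg, hpq, rfl, rfl⟩ := exists_gcd_one' (gcd_pos_of_ne_zero_right p hq)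
  have hg' : (g : ℤ) ≠ 0 := by positivity
  intro h
  obtain ⟨s', hs'⟩ := exists_sq_of_pow_four_mul_eq_sq hg' (s := s)
    (x := p' * q' * (p' ^ 2 + q' ^ 2)) (by linear_combination h)
  exact mul_mul_sq_add_sq_ne_sq_of_isCoprime (isCoprime_iff_gcd_eq_one.mpr hpq)
    (left_ne_zero_of_mul hp) (left_ne_zero_of_mul hq) hs'

theorem eq_one_of_pow_four_add_pow_four_eq_two_pow_mul {r : ℕ} {U V W : ℤ} (hU : U ≠ 0)
    (hW : W ≠ 0) (hUW : IsCoprime U W) (h : U ^ 4 + W ^ 4 = 2 ^ r * V ^ 4) : r = 1 := by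
  obtain rfl | hr := Nat.eq_zero_or_pos r
  · exact absurd (by rw [h]; ring) (not_fermat_42 hU hW (c := V ^ 2))
  have hparity : Even U ↔ Even W := by
    have : Even (U ^ 4 + W ^ 4) := h ▸ ((even_two.pow_of_ne_zero hr.ne').mul_right _)
    rwa [even_add, even_pow' four_ne_zero, even_pow' four_ne_zero] at this
  obtain ⟨hU2, hW2⟩ := odd_and_odd_of_isCoprime hUW hparity
  have hU4 : (U ^ 2) ^ 2 % 4 = 1 := sq_mod_four_eq_one_of_odd hU2.pow
  have hW4 : (W ^ 2) ^ 2 % 4 = 1 := sq_mod_four_eq_one_of_odd hW2.pow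
  by_contra hr1
  obtain ⟨k, hk⟩ : (2 : ℤ) ^ 2 ∣ 2 ^ r * V ^ 4 := (pow_dvd_pow 2 (by omega)).mul_right _
  have : U ^ 4 + W ^ 4 = (U ^ 2) ^ 2 + (W ^ 2) ^ 2 := by ring
  omega

theorem abs_eq_one_of_pow_four_add_pow_four_eq_two_mul {U V W : ℤ} (hU : U ≠ 0) (hW : W ≠ 0)
    (hUW : IsCoprime U W) (h : U ^ 4 + W ^ 4 = 2 * V ^ 4) : |U| = 1 ∧ |V| = 1 ∧ |W| = 1 := by
  have hV4 : V ^ 4 - W ^ 4 = 0 := by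
    by_contra hne
    exact pow_four_sub_pow_four_ne_sq (a := V ^ 2) (mul_ne_zero hU hW) hne
      (by linear_combination (-W ^ 4) * h)
  have hUV : |U| = |V| := abs_eq_abs_of_pow_eq_pow four_ne_zero (by linear_combination h + hV4)
  have hVW : |V| = |W| := abs_eq_abs_of_pow_eq_pow four_ne_zero (by linear_combination hV4)
  have hU1 : |U| = 1 :=
    isUnit_iff_abs_eq.mp (hUW.isUnit_of_dvd' dvd_rfl ((abs_dvd_abs U W).mp (by rw [hUV, hVW])))
  exact ⟨hU1, hUV ▸ hU1, hVW ▸ hUV ▸ hU1⟩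

theorem two_pow_mul_pow_four_add_pow_four_ne_pow_four {r : ℕ} {U V W : ℤ} (hU : U ≠ 0)
    (hW : W ≠ 0) : 2 ^ r * U ^ 4 + W ^ 4 ≠ V ^ 4 := by
  intro h
  obtain ⟨j, rfl | rfl⟩ := Nat.even_or_odd' r
  · exact pow_four_sub_pow_four_ne_sq (a := V) hW (c := 2 ^ j * U ^ 2) (by positivity)
      (by linear_combination -h)
  · have hne : (V + W) * (V - W) * (V ^ 2 + W ^ 2) ≠ 0 := by
      rw [show (V + W) * (V - W) * (V ^ 2 + W ^ 2) = 2 ^ (2 * j + 1) * U ^ 4 by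
        linear_combination -h]
      positivity
    exact mul_mul_sq_add_sq_ne_sq (left_ne_zero_of_mul (left_ne_zero_of_mul hne))
      (right_ne_zero_of_mul (left_ne_zero_of_mul hne)) (s := 2 ^ (j + 1) * U ^ 2)
      (by linear_combination -2 * h)

end Int

/-- If `r ≥ 0` and `U, V, W` are non-zero pairwise coprime integers with
`U⁴ - 2^r V⁴ + W⁴ = 0`, then `r = 1` and `|U| = |V| = |W| = 1`.  Moreover there are no non-zero
pairwise coprime integers `U, V, W` with `2^r U⁴ - V⁴ + W⁴ = 0`. -/
theorem stmt_7 :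
    (∀ (r : ℕ) (U V W : ℤ), U ≠ 0 → V ≠ 0 → W ≠ 0 →
      IsCoprime U V → IsCoprime U W → IsCoprime V W →
      U ^ 4 - 2 ^ r * V ^ 4 + W ^ 4 = 0 →
      r = 1 ∧ |U| = 1 ∧ |V| = 1 ∧ |W| = 1) ∧
    ¬ ∃ (r : ℕ) (U V W : ℤ), U ≠ 0 ∧ V ≠ 0 ∧ W ≠ 0 ∧
      IsCoprime U V ∧ IsCoprime U W ∧ IsCoprime V W ∧
      2 ^ r * U ^ 4 - V ^ 4 + W ^ 4 = 0 := by
  refine ⟨fun r U V W hU _ hW _ hUW _ h => ?_, ?_⟩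
  · have h' : U ^ 4 + W ^ 4 = 2 ^ r * V ^ 4 := by linear_combination h
    obtain rfl := Int.eq_one_of_pow_four_add_pow_four_eq_two_pow_mul hU hW hUW h'
    exact ⟨rfl, Int.abs_eq_one_of_pow_four_add_pow_four_eq_two_mul hU hW hUW (by simpa using h')⟩
  · rintro ⟨r, U, V, W, hU, -, hW, -, -, -, h⟩
    exact Int.two_pow_mul_pow_four_add_pow_four_ne_pow_four (r := r) (V := V) hU hW
      (by linear_combination h)
end
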